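/- arXiv:math/0305104 — 2 statements merged into one kernel-verified Lean document; each statement's English description precedes it below -/
import Mathlib

section
/- If f : [0,1] → ℝ is absolutely continuous, f' ∈ L¹(0,1), and γ₁ ≤ f'(t) for all t ∈ [0,1], then |Q(f)| ≤ (1/2 - √2/8)(S - γ₁), where S = f(1) - f(0) and Q(f) = ∫₀¹ f(t) dt - (√2/8) f(0) - (1 - √2/4) f(1/2) - (√2/8) f(1). -/
/-!
Peano kernel argument. Integrating by parts separately on `[0, 1/2]` and `[1/2, 1]`, with the
linear weights `s - r` and `s - (1 - r)` (`r = √2/8`), gives `Q(f) = ∫₀¹ K(s) (f'(s) - γ₁) ds`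
with `K(s) = r - s` on `[0, 1/2]` and `K(s) = 1 - r - s` on `[1/2, 1]`; subtracting `γ₁` is free
because `Q` vanishes on affine functions. Since `|K| ≤ 1/2 - r` as soon as `r ≤ 1/4`, and
`f' - γ₁ ≥ 0`, this gives `|Q(f)| ≤ (1/2 - r) ∫₀¹ (f' - γ₁) = (1/2 - r) (S - γ₁)`.
-/

open MeasureTheory Real Set

theorem integral_primitive_eq {g : ℝ → ℝ} {a b : ℝ} (hg : IntervalIntegrable g volume a b)
    (c : ℝ) :
    ∫ t in a..b, (∫ s in a..t, g s)
      = (b - c) * (∫ s in a..b, g s) + ∫ s in a..b, (c - s) * g s := by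
  have hF : AbsolutelyContinuousOnInterval (fun t ↦ ∫ s in a..t, g s) a b :=
    hg.absolutelyContinuousOnInterval_intervalIntegral left_mem_uIcc
  have hv : AbsolutelyContinuousOnInterval (fun s ↦ s - c) a b :=
    (contDiff_id.sub contDiff_const).contDiffOn.absolutelyContinuousOnInterval
  have hderiv : ∀ᵐ s, s ∈ uIoc a b →
      deriv (fun t ↦ ∫ s in a..t, g s) s * (s - c) = g s * (s - c) := by
    filter_upwards [hg.ae_hasDerivAt_integral] with s hs hs'
    rw [(hs (uIoc_subset_uIcc hs') a left_mem_uIcc).deriv]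
  have hparts := hF.integral_mul_deriv_eq_deriv_mul hv
  simp only [deriv_sub_const, deriv_id'', mul_one, intervalIntegral.integral_same, zero_mul,
    sub_zero] at hparts
  have hneg : ∫ s in a..b, (c - s) * g s = -∫ s in a..b, g s * (s - c) := by
    rw [← intervalIntegral.integral_neg]
    congr 1 with s
    ring
  rw [hparts, hneg, intervalIntegral.integral_congr_ae (g := fun s ↦ g s * (s - c)) hderiv]
  ring

theorem continuousOn_of_eq_primitive {f g : ℝ → ℝ} {a b : ℝ}
    (hg : IntervalIntegrable g volume a b)
    (hf : ∀ t ∈ uIcc a b, f t = f a + ∫ s in a..t, g s) :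
    ContinuousOn f (uIcc a b) :=
  (continuousOn_const.add
    (intervalIntegral.continuousOn_primitive_interval' hg left_mem_uIcc)).congr hf

theorem eq_primitive_of_mem_uIcc {f g : ℝ → ℝ} {a b c d : ℝ}
    (hg : IntervalIntegrable g volume a b)
    (hf : ∀ t ∈ uIcc a b, f t = f a + ∫ s in a..t, g s) (hc : c ∈ uIcc a b) (hd : d ∈ uIcc a b) :
    ∀ t ∈ uIcc c d, f t = f c + ∫ s in c..t, g s := by
  intro t ht
  have ht' : t ∈ uIcc a b := uIcc_subset_uIcc hc hd ht
  rw [hf t ht', hf c hc, add_assoc, intervalIntegral.integral_add_adjacent_intervals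
    (hg.mono_set (uIcc_subset_uIcc left_mem_uIcc hc)) (hg.mono_set (uIcc_subset_uIcc hc ht'))]

theorem integral_eq_of_eq_primitive {f g : ℝ → ℝ} {a b : ℝ}
    (hg : IntervalIntegrable g volume a b)
    (hf : ∀ t ∈ uIcc a b, f t = f a + ∫ s in a..t, g s) (c : ℝ) :
    ∫ t in a..b, f t = (b - c) * f b - (a - c) * f a + ∫ s in a..b, (c - s) * g s := by
  have hF : IntervalIntegrable (fun t ↦ ∫ s in a..t, g s) volume a b :=
    (intervalIntegral.continuousOn_primitive_interval' hg left_mem_uIcc).intervalIntegrable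
  rw [intervalIntegral.integral_congr hf, intervalIntegral.integral_add intervalIntegrable_const hF,
    integral_primitive_eq hg c, intervalIntegral.integral_const, smul_eq_mul, hf b right_mem_uIcc]
  ring

theorem integral_sub_mul_eq {g : ℝ → ℝ} {a b : ℝ} (hg : IntervalIntegrable g volume a b)
    (c γ : ℝ) :
    ∫ s in a..b, (c - s) * g s
      = (∫ s in a..b, (c - s) * (g s - γ)) + γ * (b - a) * (c - (a + b) / 2) := by
  have hsplit : (fun s ↦ (c - s) * g s) = fun s ↦ (c - s) * (g s - γ) + γ * (c - s) := by
    ext s; ring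
  rw [hsplit, intervalIntegral.integral_add
      ((hg.sub intervalIntegrable_const).continuousOn_mul (by fun_prop))
      (Continuous.intervalIntegrable (by fun_prop) _ _),
    intervalIntegral.integral_const_mul, intervalIntegral.integral_sub intervalIntegrable_const
      intervalIntegral.intervalIntegrable_id, integral_id, intervalIntegral.integral_const,
    smul_eq_mul]
  ring

theorem abs_integral_mul_le_mul_integral {K h : ℝ → ℝ} {a b M : ℝ} (hab : a ≤ b)
    (hh : IntervalIntegrable h volume a b) (hh0 : ∀ s ∈ Icc a b, 0 ≤ h s)
    (hK : ∀ s ∈ Icc a b, |K s| ≤ M) :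
    |∫ s in a..b, K s * h s| ≤ M * ∫ s in a..b, h s := by
  rw [← intervalIntegral.integral_const_mul, ← Real.norm_eq_abs]
  refine intervalIntegral.norm_integral_le_of_norm_le hab (ae_of_all _ fun s hs ↦ ?_)
    (hh.const_mul M)
  have hs' : s ∈ Icc a b := Ioc_subset_Icc_self hs
  rw [Real.norm_eq_abs, abs_mul, abs_of_nonneg (hh0 s hs')]
  exact mul_le_mul_of_nonneg_right (hK s hs') (hh0 s hs')

/-- `Q` with the weight `√2/8` replaced by a parameter `r`. -/
noncomputable def threePointError (r : ℝ) (f : ℝ → ℝ) : ℝ :=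
  (∫ t in (0:ℝ)..1, f t) - r * f 0 - (1 - 2 * r) * f (1/2) - r * f 1

theorem threePointError_eq_integral_kernel {f g : ℝ → ℝ} (hg : IntervalIntegrable g volume 0 1)
    (hf : ∀ t ∈ uIcc 0 1, f t = f 0 + ∫ s in (0:ℝ)..t, g s) (r γ : ℝ) :
    threePointError r f = (∫ s in (0:ℝ)..1/2, (r - s) * (g s - γ))
      + ∫ s in (1/2:ℝ)..1, (1 - r - s) * (g s - γ) := by
  have h0 : (0:ℝ) ∈ uIcc 0 1 := left_mem_uIcc
  have hhalf : (1/2:ℝ) ∈ uIcc 0 1 := by rw [uIcc_of_le zero_le_one]; norm_num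
  have h1 : (1:ℝ) ∈ uIcc 0 1 := right_mem_uIcc
  have hfi := (continuousOn_of_eq_primitive hg hf).intervalIntegrable (μ := volume)
  have hleft := integral_eq_of_eq_primitive (hg.mono_set (uIcc_subset_uIcc h0 hhalf))
    (eq_primitive_of_mem_uIcc hg hf h0 hhalf) r
  have hright := integral_eq_of_eq_primitive (hg.mono_set (uIcc_subset_uIcc hhalf h1))
    (eq_primitive_of_mem_uIcc hg hf hhalf h1) (1 - r)
  rw [threePointError, ← intervalIntegral.integral_add_adjacent_intervals
      (hfi.mono_set (uIcc_subset_uIcc h0 hhalf)) (hfi.mono_set (uIcc_subset_uIcc hhalf h1)),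
    hleft, hright, integral_sub_mul_eq (hg.mono_set (uIcc_subset_uIcc h0 hhalf)) r γ,
    integral_sub_mul_eq (hg.mono_set (uIcc_subset_uIcc hhalf h1)) (1 - r) γ]
  ring

theorem abs_threePointError_le {f g : ℝ → ℝ} {r γ : ℝ} (hr : r ≤ 1/4)
    (hg : IntervalIntegrable g volume 0 1)
    (hf : ∀ t ∈ uIcc 0 1, f t = f 0 + ∫ s in (0:ℝ)..t, g s) (hγ : ∀ t ∈ Icc (0:ℝ) 1, γ ≤ g t) :
    |threePointError r f| ≤ (1/2 - r) * (f 1 - f 0 - γ) := by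
  have h0 : (0:ℝ) ∈ uIcc 0 1 := left_mem_uIcc
  have hhalf : (1/2:ℝ) ∈ uIcc 0 1 := by rw [uIcc_of_le zero_le_one]; norm_num
  have h1 : (1:ℝ) ∈ uIcc 0 1 := right_mem_uIcc
  have hh : IntervalIntegrable (fun s ↦ g s - γ) volume 0 1 := hg.sub intervalIntegrable_const
  have hleft := abs_integral_mul_le_mul_integral (K := fun s ↦ r - s) (M := 1/2 - r)
    (by norm_num) (hh.mono_set (uIcc_subset_uIcc h0 hhalf))
    (fun s hs ↦ sub_nonneg.2 (hγ s ⟨hs.1, hs.2.trans (by norm_num)⟩))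
    (fun s hs ↦ abs_le.2 ⟨by linarith [hs.2], by linarith [hs.1]⟩)
  have hright := abs_integral_mul_le_mul_integral (K := fun s ↦ 1 - r - s) (M := 1/2 - r)
    (by norm_num) (hh.mono_set (uIcc_subset_uIcc hhalf h1))
    (fun s hs ↦ sub_nonneg.2 (hγ s ⟨(by norm_num : (0:ℝ) ≤ 1/2).trans hs.1, hs.2⟩))
    (fun s hs ↦ abs_le.2 ⟨by linarith [hs.2], by linarith [hs.1]⟩)
  have htotal : (∫ s in (0:ℝ)..1/2, g s - γ) + (∫ s in (1/2:ℝ)..1, g s - γ) = f 1 - f 0 - γ := by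
    rw [intervalIntegral.integral_add_adjacent_intervals (hh.mono_set (uIcc_subset_uIcc h0 hhalf))
      (hh.mono_set (uIcc_subset_uIcc hhalf h1)), intervalIntegral.integral_sub hg
      intervalIntegrable_const, hf 1 h1]
    simp
  rw [threePointError_eq_integral_kernel hg hf r γ]
  calc _ ≤ _ := abs_add_le _ _
    _ ≤ _ := add_le_add hleft hright
    _ = _ := by rw [← htotal]; ring

theorem stmt_8 (f f' : ℝ → ℝ) (γ₁ : ℝ)
    (hac : ∀ t ∈ Icc (0:ℝ) 1, f t = f 0 + ∫ s in (0:ℝ)..t, f' s)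
    (hint : IntervalIntegrable f' volume 0 1)
    (hbd : ∀ t ∈ Icc (0:ℝ) 1, γ₁ ≤ f' t) :
    |(∫ t in (0:ℝ)..1, f t) - Real.sqrt 2 / 8 * f 0
        - (1 - Real.sqrt 2 / 4) * f (1/2) - Real.sqrt 2 / 8 * f 1|
      ≤ (1/2 - Real.sqrt 2 / 8) * ((f 1 - f 0) - γ₁) := by
  have hr : Real.sqrt 2 / 8 ≤ 1/4 := by
    nlinarith [Real.sqrt_nonneg 2, Real.sq_sqrt (zero_le_two : (0:ℝ) ≤ 2)]
  have hweight : Real.sqrt 2 / 4 = 2 * (Real.sqrt 2 / 8) := by ring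
  rw [hweight]
  exact abs_threePointError_le hr hint (by rwa [uIcc_of_le zero_le_one]) hbd
end

section
/- If f : [0,1] → ℝ is absolutely continuous with f' ∈ L²(0,1), then |Q(f)| ≤ √(11/96 - √2/16) · σ(f'), where σ(f') = (∫₀¹ f'(t)² dt - (∫₀¹ f'(t) dt)²)^{1/2} and Q(f) = ∫₀¹ f(t) dt - (√2/8) f(0) - (1 - √2/4) f(1/2) - (√2/8) f(1). Moreover the constant √(11/96 - √2/16) is sharp. -/
open MeasureTheory Real Set

/-!
Integrating by parts on `[0, 1/2]` and on `[1/2, 1]` gives the Peano-kernel representation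
`Q f = ∫₀¹ K f'` with the piecewise linear kernel `K = peanoKernel`. Since `∫₀¹ K = 0`, `Q f` is
the covariance of `K` and `f'` under the uniform distribution on `[0, 1]`, so Cauchy–Schwarz
bounds it by `‖K‖₂ σ(f')`, where `‖K‖₂² = 11/96 - √2/16`. Equality holds for `f' = K`.
-/

section CauchySchwarz

open ProbabilityTheory

variable {Ω : Type*} [MeasurableSpace Ω] {μ : Measure Ω} {X Y : Ω → ℝ}

theorem integral_mul_eq_inner_toLp (hX : MemLp X 2 μ) (hY : MemLp Y 2 μ) :
    ∫ ω, X ω * Y ω ∂μ = inner ℝ (hX.toLp X) (hY.toLp Y) := by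
  rw [L2.inner_def]
  refine integral_congr_ae ?_
  filter_upwards [hX.coeFn_toLp, hY.coeFn_toLp] with ω hXω hYω
  rw [hXω, hYω, real_inner_eq_re_inner, RCLike.inner_apply]
  simp [mul_comm]

theorem sq_integral_mul_le_integral_sq_mul_integral_sq (hX : MemLp X 2 μ) (hY : MemLp Y 2 μ) :
    (∫ ω, X ω * Y ω ∂μ) ^ 2 ≤ (∫ ω, X ω ^ 2 ∂μ) * ∫ ω, Y ω ^ 2 ∂μ := by
  simp only [sq, integral_mul_eq_inner_toLp hX hY, integral_mul_eq_inner_toLp hX hX,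
    integral_mul_eq_inner_toLp hY hY]
  exact real_inner_mul_inner_self_le _ _

theorem abs_covariance_le_sqrt_variance_mul_sqrt_variance [IsFiniteMeasure μ]
    (hX : MemLp X 2 μ) (hY : MemLp Y 2 μ) :
    |cov[X, Y; μ]| ≤ √Var[X; μ] * √Var[Y; μ] := by
  rw [covariance, variance_eq_integral hX.aemeasurable, variance_eq_integral hY.aemeasurable,
    ← sqrt_mul (integral_nonneg fun _ => sq_nonneg _), ← sqrt_sq_eq_abs]
  exact sqrt_le_sqrt (sq_integral_mul_le_integral_sq_mul_integral_sq
    (hX.sub (memLp_const _)) (hY.sub (memLp_const _)))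

theorem abs_integral_mul_le_of_integral_eq_zero {K g : ℝ → ℝ}
    (hK : IntervalIntegrable K volume 0 1)
    (hK2 : IntervalIntegrable (fun t => K t ^ 2) volume 0 1) (hK0 : ∫ t in (0:ℝ)..1, K t = 0)
    (hg : IntervalIntegrable g volume 0 1)
    (hg2 : IntervalIntegrable (fun t => g t ^ 2) volume 0 1) :
    |∫ t in (0:ℝ)..1, K t * g t| ≤ √(∫ t in (0:ℝ)..1, K t ^ 2) *
      √((∫ t in (0:ℝ)..1, g t ^ 2) - (∫ t in (0:ℝ)..1, g t) ^ 2) := by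
  have : IsProbabilityMeasure (volume.restrict (Ioc (0:ℝ) 1)) := ⟨by simp⟩
  have hKL := (memLp_two_iff_integrable_sq hK.1.aestronglyMeasurable).2 hK2.1
  have hgL := (memLp_two_iff_integrable_sq hg.1.aestronglyMeasurable).2 hg2.1
  simp only [intervalIntegral.integral_of_le zero_le_one] at hK0 ⊢
  have hcov := abs_covariance_le_sqrt_variance_mul_sqrt_variance hKL hgL
  rw [covariance_eq_sub hKL hgL, variance_eq_sub hKL, variance_eq_sub hgL, hK0] at hcov
  simpa using hcov

end CauchySchwarz

theorem integral_eq_of_eq_add_integral {f f' : ℝ → ℝ} {a b : ℝ} (hab : a ≤ b)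
    (hf : ∀ t ∈ Icc a b, f t = f a + ∫ s in a..t, f' s)
    (hf' : IntervalIntegrable f' volume a b) (c : ℝ) :
    ∫ t in a..b, f t = (b - c) * f b - (a - c) * f a + ∫ s in a..b, (c - s) * f' s := by
  set F : ℝ → ℝ := fun t => f a + ∫ s in a..t, f' s
  have hF : AbsolutelyContinuousOnInterval F a b :=
    (LipschitzWith.const (f a)).lipschitzOnWith.absolutelyContinuousOnInterval.add
      (hf'.absolutelyContinuousOnInterval_intervalIntegral left_mem_uIcc)
  have hv : AbsolutelyContinuousOnInterval (fun t => t - c) a b :=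
    (LipschitzWith.id.sub (LipschitzWith.const c)).lipschitzOnWith.absolutelyContinuousOnInterval
  have hderiv : ∀ᵐ s, s ∈ uIoc a b → deriv F s * (s - c) = -((c - s) * f' s) := by
    filter_upwards [hf'.ae_hasDerivAt_integral] with s hs hsab
    rw [((hs (uIoc_subset_uIcc hsab) a left_mem_uIcc).const_add (f a)).deriv]
    ring
  have hfF : EqOn f F (uIcc a b) := by
    rw [uIcc_of_le hab]; exact hf
  have hparts := hF.integral_mul_deriv_eq_deriv_mul hv
  simp only [deriv_sub_const, deriv_id'', mul_one] at hparts
  rw [intervalIntegral.integral_congr hfF, hfF right_mem_uIcc, hfF left_mem_uIcc, hparts,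
    intervalIntegral.integral_congr_ae hderiv, intervalIntegral.integral_neg]
  ring

theorem eq_add_integral_of_mem_Icc {f f' : ℝ → ℝ} {a b x : ℝ}
    (hf : ∀ t ∈ Icc a b, f t = f a + ∫ s in a..t, f' s)
    (hf' : IntervalIntegrable f' volume a b) (hx : x ∈ Icc a b) :
    ∀ t ∈ Icc x b, f t = f x + ∫ s in x..t, f' s := by
  intro t ht
  have hsub : ∀ y ∈ Icc a b, IntervalIntegrable f' volume a y := fun y hy =>
    hf'.mono_set (uIcc_subset_uIcc_left (by rwa [uIcc_of_le (hx.1.trans hx.2)]))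
  have ht' : t ∈ Icc a b := ⟨hx.1.trans ht.1, ht.2⟩
  rw [hf t ht', hf x hx,
    ← intervalIntegral.integral_interval_sub_left (hsub t ht') (hsub x hx)]
  ring

section Piecewise

variable {E : Type*} {g₁ g₂ : ℝ → E} {a b c : ℝ}

theorem eqOn_ite_le_left (hab : a ≤ b) :
    EqOn g₁ (fun x => if x ≤ b then g₁ x else g₂ x) (uIoc a b) := by
  intro x hx
  rw [uIoc_of_le hab] at hx
  simp [hx.2]

theorem eqOn_ite_le_right (hbc : b ≤ c) :
    EqOn g₂ (fun x => if x ≤ b then g₁ x else g₂ x) (uIoc b c) := by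
  intro x hx
  rw [uIoc_of_le hbc] at hx
  simp [not_le.2 hx.1]

theorem intervalIntegrable_ite_le [NormedAddCommGroup E] (hab : a ≤ b) (hbc : b ≤ c)
    (h₁ : IntervalIntegrable g₁ volume a b) (h₂ : IntervalIntegrable g₂ volume b c) :
    IntervalIntegrable (fun x => if x ≤ b then g₁ x else g₂ x) volume a c :=
  (h₁.congr (eqOn_ite_le_left hab)).trans (h₂.congr (eqOn_ite_le_right hbc))

theorem integral_ite_le [NormedAddCommGroup E] [NormedSpace ℝ E] (hab : a ≤ b) (hbc : b ≤ c)
    (h₁ : IntervalIntegrable g₁ volume a b) (h₂ : IntervalIntegrable g₂ volume b c) :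
    ∫ x in a..c, (if x ≤ b then g₁ x else g₂ x)
      = (∫ x in a..b, g₁ x) + ∫ x in b..c, g₂ x := by
  have e₁ := eqOn_ite_le_left (g₁ := g₁) (g₂ := g₂) hab
  have e₂ := eqOn_ite_le_right (g₁ := g₁) (g₂ := g₂) hbc
  rw [← intervalIntegral.integral_add_adjacent_intervals (h₁.congr e₁) (h₂.congr e₂),
    intervalIntegral.integral_congr_ae (ae_of_all _ fun x hx => e₁.symm hx),
    intervalIntegral.integral_congr_ae (ae_of_all _ fun x hx => e₂.symm hx)]

end Piecewise

noncomputable def peanoKernel (s : ℝ) : ℝ :=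
  if s ≤ 1 / 2 then √2 / 8 - s else 1 - √2 / 8 - s

theorem integral_peanoKernel_mul {g : ℝ → ℝ} (hg : IntervalIntegrable g volume 0 1) :
    ∫ s in (0:ℝ)..1, peanoKernel s * g s
      = (∫ s in (0:ℝ)..1 / 2, (√2 / 8 - s) * g s)
        + ∫ s in (1 / 2 : ℝ)..1, (1 - √2 / 8 - s) * g s := by
  simp only [peanoKernel, ite_mul]
  exact integral_ite_le (by norm_num) (by norm_num)
    ((hg.mono_set (uIcc_subset_uIcc_left (by norm_num))).continuousOn_mul (by fun_prop))
    ((hg.mono_set (uIcc_subset_uIcc_right (by norm_num))).continuousOn_mul (by fun_prop))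

theorem integral_peanoKernel : ∫ s in (0:ℝ)..1, peanoKernel s = 0 := by
  have h := integral_peanoKernel_mul (g := fun _ => 1) intervalIntegrable_const
  simp only [mul_one] at h
  rw [h]
  simp [intervalIntegral.integral_comp_sub_left (fun x => x)]
  ring

theorem intervalIntegrable_peanoKernel_sq :
    IntervalIntegrable (fun s => peanoKernel s ^ 2) volume 0 1 := by
  simp only [peanoKernel, ite_pow]
  exact intervalIntegrable_ite_le (by norm_num) (by norm_num)
    (Continuous.intervalIntegrable (by fun_prop) _ _)
    (Continuous.intervalIntegrable (by fun_prop) _ _)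

theorem integral_peanoKernel_sq : ∫ s in (0:ℝ)..1, peanoKernel s ^ 2 = 11 / 96 - √2 / 16 := by
  simp only [peanoKernel, ite_pow]
  rw [integral_ite_le (by norm_num) (by norm_num)
    (Continuous.intervalIntegrable (by fun_prop) _ _)
    (Continuous.intervalIntegrable (by fun_prop) _ _)]
  simp [intervalIntegral.integral_comp_sub_left (fun x => x ^ 2)]
  linear_combination (1 / 64 : ℝ) * sq_sqrt (show (0:ℝ) ≤ 2 by norm_num)

theorem intervalIntegrable_peanoKernel : IntervalIntegrable peanoKernel volume 0 1 :=
  intervalIntegrable_ite_le (by norm_num) (by norm_num)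
    (Continuous.intervalIntegrable (by fun_prop) _ _)
    (Continuous.intervalIntegrable (by fun_prop) _ _)

theorem quadrature_error_eq_integral_peanoKernel_mul {f f' : ℝ → ℝ}
    (hf : ∀ t ∈ Icc (0:ℝ) 1, f t = f 0 + ∫ s in (0:ℝ)..t, f' s)
    (hf' : IntervalIntegrable f' volume 0 1) :
    (∫ t in (0:ℝ)..1, f t) - √2 / 8 * f 0 - (1 - √2 / 4) * f (1 / 2) - √2 / 8 * f 1
      = ∫ s in (0:ℝ)..1, peanoKernel s * f' s := by
  have hf'₁ : IntervalIntegrable f' volume 0 (1 / 2) :=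
    hf'.mono_set (uIcc_subset_uIcc_left (by norm_num))
  have hf'₂ : IntervalIntegrable f' volume (1 / 2) 1 :=
    hf'.mono_set (uIcc_subset_uIcc_right (by norm_num))
  have hcont : ContinuousOn f (uIcc 0 1) :=
    (continuousOn_const.add (intervalIntegral.continuousOn_primitive_interval' hf'
      left_mem_uIcc)).congr (by rw [uIcc_of_le zero_le_one]; exact hf)
  have h₁ := integral_eq_of_eq_add_integral (by norm_num)
    (fun t ht => hf t ⟨ht.1, ht.2.trans (by norm_num)⟩) hf'₁ (√2 / 8)
  have h₂ := integral_eq_of_eq_add_integral (by norm_num)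
    (eq_add_integral_of_mem_Icc hf hf' (by norm_num)) hf'₂ (1 - √2 / 8)
  rw [← intervalIntegral.integral_add_adjacent_intervals (b := 1 / 2)
      ((hcont.mono (uIcc_subset_uIcc_left (by norm_num))).intervalIntegrable)
      ((hcont.mono (uIcc_subset_uIcc_right (by norm_num))).intervalIntegrable),
    h₁, h₂, integral_peanoKernel_mul hf']
  ring

theorem stmt_12 :
    (∀ f f' : ℝ → ℝ,
      (∀ t ∈ Icc (0:ℝ) 1, f t = f 0 + ∫ s in (0:ℝ)..t, f' s) →
      IntervalIntegrable f' volume 0 1 →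
      IntervalIntegrable (fun t => (f' t)^2) volume 0 1 →
      |(∫ t in (0:ℝ)..1, f t) - Real.sqrt 2 / 8 * f 0
          - (1 - Real.sqrt 2 / 4) * f (1/2) - Real.sqrt 2 / 8 * f 1|
        ≤ Real.sqrt (11/96 - Real.sqrt 2 / 16) *
            Real.sqrt ((∫ t in (0:ℝ)..1, (f' t)^2) - (f 1 - f 0)^2)) ∧
    ∀ c : ℝ,
      (∀ f f' : ℝ → ℝ,
        (∀ t ∈ Icc (0:ℝ) 1, f t = f 0 + ∫ s in (0:ℝ)..t, f' s) →
        IntervalIntegrable f' volume 0 1 →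
        IntervalIntegrable (fun t => (f' t)^2) volume 0 1 →
        |(∫ t in (0:ℝ)..1, f t) - Real.sqrt 2 / 8 * f 0
            - (1 - Real.sqrt 2 / 4) * f (1/2) - Real.sqrt 2 / 8 * f 1|
          ≤ c * Real.sqrt ((∫ t in (0:ℝ)..1, (f' t)^2) - (f 1 - f 0)^2)) →
      Real.sqrt (11/96 - Real.sqrt 2 / 16) ≤ c := by
  have hK := intervalIntegrable_peanoKernel
  have hK2 := intervalIntegrable_peanoKernel_sq
  refine ⟨fun f f' hf hf' hf2 => ?_, fun c hc => ?_⟩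
  · have hincr : f 1 - f 0 = ∫ s in (0:ℝ)..1, f' s := by
      rw [hf 1 (by norm_num)]; ring
    rw [quadrature_error_eq_integral_peanoKernel_mul hf hf', hincr, ← integral_peanoKernel_sq]
    exact abs_integral_mul_le_of_integral_eq_zero hK hK2 integral_peanoKernel hf' hf2
  · set F : ℝ → ℝ := fun t => ∫ s in (0:ℝ)..t, peanoKernel s
    have hF : ∀ t ∈ Icc (0:ℝ) 1, F t = F 0 + ∫ s in (0:ℝ)..t, peanoKernel s := by
      simp [F]
    have hQ := hc F peanoKernel hF hK hK2
    have hpos : 0 < 11 / 96 - √2 / 16 := by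
      nlinarith [sq_sqrt (show (0:ℝ) ≤ 2 by norm_num), sqrt_nonneg 2]
    have hFinc : F 1 - F 0 = 0 := by simp [F, integral_peanoKernel]
    have hKK : ∫ s in (0:ℝ)..1, peanoKernel s * peanoKernel s = 11 / 96 - √2 / 16 := by
      simp only [← sq, integral_peanoKernel_sq]
    rw [quadrature_error_eq_integral_peanoKernel_mul hF hK, hKK, abs_of_pos hpos, hFinc,
      zero_pow two_ne_zero, sub_zero, integral_peanoKernel_sq] at hQ
    exact le_of_mul_le_mul_right (by rwa [mul_self_sqrt hpos.le]) (sqrt_pos.2 hpos)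
end
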